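/- Monotone decay of free energy along minimizers: if (ρ_t, j_t) satisfies ρ̇_t = −div j_t with j_t = J(ρ_t) (so Φ(ρ_t, j_t, F(ρ_t)) = 0), then d/dt F(ρ_t) = −Ψ*_S(ρ_t, F^S(ρ_t)) − Φ(ρ_t, J(ρ_t), F^A) ≤ 0, so the relative entropy F(ρ_t) is nonincreasing in t. -/

import Mathlib

open Finset

/-- Dual pairing `j·f = (1/2) ∑_{xy} j_{xy} f_{xy}`. -/
noncomputable def pairF {V : Type*} [Fintype V] (j f : V → V → ℝ) : ℝ :=
  (1 / 2) * ∑ x, ∑ y, j x y * f x y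

/-- `Ψ*` with mobility `a`. -/
noncomputable def PsiStar {V : Type*} [Fintype V] (a f : V → V → ℝ) : ℝ :=
  ∑ x, ∑ y, a x y * (Real.cosh (f x y / 2) - 1)

/-- `Ψ`, the Legendre dual of `Ψ*`. -/
noncomputable def PsiL {V : Type*} [Fintype V] (a j : V → V → ℝ) : ℝ :=
  ⨆ g : V → V → ℝ, (pairF j g - PsiStar a g)

/-- The Onsager–Machlup functional `Φ(ρ,j,f) = Ψ(ρ,j) - j·f + Ψ*(ρ,f)`. -/
noncomputable def PhiOM {V : Type*} [Fintype V] (a j f : V → V → ℝ) : ℝ :=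
  PsiL a j - pairF j f + PsiStar a f

/-- Mobility `a_{xy}(ρ) = 2√(ρ(x) r_{xy} ρ(y) r_{yx})`. -/
noncomputable def aMob {V : Type*} (r : V → V → ℝ) (ρ : V → ℝ) (x y : V) : ℝ :=
  2 * Real.sqrt (ρ x * r x y * (ρ y * r y x))

/-- Probability current `J_{xy}(ρ) = ρ(x) r_{xy} - ρ(y) r_{yx}`. -/
def Jcur {V : Type*} (r : V → V → ℝ) (ρ : V → ℝ) (x y : V) : ℝ :=
  ρ x * r x y - ρ y * r y x

/-!
Write `F = F^S + F^A` with `F^S_{xy} = log (ρ(x)π(y) / (ρ(y)π(x)))` and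
`F^A_{xy} = log (π(x)r_{xy} / (π(y)r_{yx}))`; then `J(ρ) = a(ρ) sinh (F / 2)`, so `J(ρ)` and
`F` are in Legendre duality and `Ψ(ρ, J) = J·F - Ψ*(ρ, F)`. Along the master equation the
entropy changes at rate `-J·F^S`, and the addition formula for `cosh` splits `J·F^S` into
`Ψ*_S(ρ, F^S) + Φ(ρ, J, F^A)` plus the cross term `∑ a sinh (F^S/2) sinh (F^A/2)`. That cross
term vanishes because `π` is invariant, and the two remaining terms are nonnegative.
-/

section Real

open Real

theorem Real.cosh_add_sinh_mul_sub_le_cosh (a b : ℝ) : cosh a + sinh a * (b - a) ≤ cosh b := by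
  rw [cosh_eq, sinh_eq, cosh_eq]
  have h1 := add_one_le_exp (b - a)
  have h2 := add_one_le_exp (a - b)
  have e1 : exp a * exp (b - a) = exp b := by rw [← exp_add]; ring_nf
  have e2 : exp (-a) * exp (a - b) = exp (-b) := by rw [← exp_add]; ring_nf
  nlinarith [exp_pos a, exp_pos (-a)]

theorem Real.two_mul_sqrt_mul_mul_cosh_half_log_div {p q : ℝ} (hp : 0 < p) (hq : 0 < q) :
    2 * √(p * q) * cosh (log (p / q) / 2) = p + q := by
  have hsp := sqrt_pos.2 hp
  have hsq := sqrt_pos.2 hq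
  rw [← log_sqrt (div_pos hp hq).le, sqrt_div' _ hq.le, cosh_log (by positivity), sqrt_mul hp.le]
  field_simp
  rw [sq_sqrt hp.le, sq_sqrt hq.le]

theorem Real.two_mul_sqrt_mul_mul_sinh_half_log_div {p q : ℝ} (hp : 0 < p) (hq : 0 < q) :
    2 * √(p * q) * sinh (log (p / q) / 2) = p - q := by
  have hsp := sqrt_pos.2 hp
  have hsq := sqrt_pos.2 hq
  rw [← log_sqrt (div_pos hp hq).le, sqrt_div' _ hq.le, sinh_log (by positivity), sqrt_mul hp.le]
  field_simp
  rw [sq_sqrt hp.le, sq_sqrt hq.le]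

theorem HasDerivAt.mul_log_div_const {f : ℝ → ℝ} {f' t : ℝ} (hf : HasDerivAt f f' t)
    (hft : f t ≠ 0) {c : ℝ} (hc : c ≠ 0) :
    HasDerivAt (fun s => f s * Real.log (f s / c)) (f' * (Real.log (f t / c) + 1)) t := by
  refine (hf.fun_mul ((hf.div_const c).log (div_ne_zero hft hc))).congr_deriv ?_
  rw [div_div_div_cancel_right₀ hc, mul_div_cancel₀ _ hft]
  ring

end Real

section Duality

open Real

variable {V : Type*} [Fintype V]

theorem pairF_sub_PsiStar (a j g : V → V → ℝ) :
    pairF j g - PsiStar a g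
      = ∑ x, ∑ y, (j x y * g x y / 2 - a x y * (cosh (g x y / 2) - 1)) := by
  simp only [pairF, PsiStar, mul_sum, ← sum_sub_distrib]
  ring_nf

theorem PsiStar_nonneg {a : V → V → ℝ} (ha : ∀ x y, 0 ≤ a x y) {f : V → V → ℝ} :
    0 ≤ PsiStar a f :=
  sum_nonneg fun x _ => sum_nonneg fun y _ =>
    mul_nonneg (ha x y) (sub_nonneg.2 (one_le_cosh _))

variable {a j f : V → V → ℝ}

/-- `f` attains the supremum defining `Ψ(a, j)`, by the tangent-line bound for `cosh`. -/
theorem pairF_sub_PsiStar_le (ha : ∀ x y, 0 ≤ a x y)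
    (hj : ∀ x y, j x y = a x y * sinh (f x y / 2)) (g : V → V → ℝ) :
    pairF j g - PsiStar a g ≤ pairF j f - PsiStar a f := by
  rw [pairF_sub_PsiStar, pairF_sub_PsiStar]
  refine sum_le_sum fun x _ => sum_le_sum fun y _ => ?_
  have htangent := cosh_add_sinh_mul_sub_le_cosh (f x y / 2) (g x y / 2)
  have hax := ha x y
  rw [hj x y]
  nlinarith

theorem PsiL_eq_pairF_sub_PsiStar (ha : ∀ x y, 0 ≤ a x y)
    (hj : ∀ x y, j x y = a x y * sinh (f x y / 2)) :
    PsiL a j = pairF j f - PsiStar a f :=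
  le_antisymm (ciSup_le (pairF_sub_PsiStar_le ha hj))
    (le_ciSup ⟨_, Set.forall_mem_range.2 (pairF_sub_PsiStar_le ha hj)⟩ f)

theorem PhiOM_nonneg (ha : ∀ x y, 0 ≤ a x y) (hj : ∀ x y, j x y = a x y * sinh (f x y / 2))
    (g : V → V → ℝ) : 0 ≤ PhiOM a j g := by
  have hg := pairF_sub_PsiStar_le ha hj g
  rw [PhiOM, PsiL_eq_pairF_sub_PsiStar ha hj]
  linarith

theorem pairF_eq_PsiStar_add_PhiOM_add {fS fA : V → V → ℝ} (ha : ∀ x y, 0 ≤ a x y)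
    (hj : ∀ x y, j x y = a x y * sinh ((fS x y + fA x y) / 2)) :
    pairF j fS = PsiStar (fun x y => a x y * cosh (fA x y / 2)) fS + PhiOM a j fA
      + ∑ x, ∑ y, a x y * sinh (fS x y / 2) * sinh (fA x y / 2) := by
  have hcross : PsiStar a (fun x y => fS x y + fA x y)
      = PsiStar (fun x y => a x y * cosh (fA x y / 2)) fS + PsiStar a fA
        + ∑ x, ∑ y, a x y * sinh (fS x y / 2) * sinh (fA x y / 2) := by
    simp only [PsiStar, ← sum_add_distrib, add_div, cosh_add]
    refine sum_congr rfl fun x _ => sum_congr rfl fun y _ => ?_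
    ring
  have hpair : pairF j (fun x y => fS x y + fA x y) = pairF j fS + pairF j fA := by
    simp only [pairF, mul_add, sum_add_distrib]
  rw [PhiOM, PsiL_eq_pairF_sub_PsiStar ha hj, hpair, hcross]
  ring

/-- Discrete integration by parts. -/
theorem sum_sum_mul_eq_pairF_sub (hj : ∀ x y, j y x = -j x y) (φ : V → ℝ) :
    ∑ x, (∑ y, j x y) * φ x = pairF j (fun x y => φ x - φ y) := by
  have hswap : ∑ x, ∑ y, j x y * φ y = -∑ x, ∑ y, j x y * φ x := by
    rw [sum_comm, ← sum_neg_distrib]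
    exact sum_congr rfl fun x _ => by
      rw [← sum_neg_distrib]; exact sum_congr rfl fun y _ => by rw [hj, neg_mul]
  simp only [pairF, mul_sub, sum_sub_distrib, hswap, sum_mul]
  ring

end Duality

section MarkovChain

variable {V : Type*} {r : V → V → ℝ} {π : V → ℝ}

theorem aMob_nonneg (r : V → V → ℝ) (ρ : V → ℝ) (x y : V) : 0 ≤ aMob r ρ x y := by
  unfold aMob; positivity

theorem rates_eq_zero_of_not_pos (hr : ∀ x y, 0 ≤ r x y)
    (hsym : ∀ x y, 0 < r x y ↔ 0 < r y x)
    {x y : V} (h : ¬ 0 < r x y) : r x y = 0 ∧ r y x = 0 :=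
  ⟨le_antisymm (not_lt.1 h) (hr x y),
    le_antisymm (not_lt.1 fun hyx => h ((hsym x y).2 hyx)) (hr y x)⟩

theorem Jcur_eq_aMob_mul_sinh {ρ : V → ℝ} (hr : ∀ x y, 0 ≤ r x y)
    (hsym : ∀ x y, 0 < r x y ↔ 0 < r y x) (hπ : ∀ x, 0 < π x) (hρ : ∀ x, 0 < ρ x)
    (x y : V) :
    Jcur r ρ x y = aMob r ρ x y *
      Real.sinh ((Real.log (ρ x * π y / (ρ y * π x))
        + Real.log (π x * r x y / (π y * r y x))) / 2) := by
  by_cases h : 0 < r x y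
  · have hyx := (hsym x y).1 h
    have hx := hρ x; have hy := hρ y; have hπx := hπ x; have hπy := hπ y
    have hF : Real.log (ρ x * π y / (ρ y * π x)) + Real.log (π x * r x y / (π y * r y x))
        = Real.log (ρ x * r x y / (ρ y * r y x)) := by
      rw [← Real.log_mul (by positivity) (by positivity)]
      congr 1; field_simp
    rw [hF, aMob, Real.two_mul_sqrt_mul_mul_sinh_half_log_div (by positivity) (by positivity),
      Jcur]
  · -- `F^A_{xy}` is the junk value `log 0 = 0` here, but the mobility vanishes too.
    obtain ⟨hxy, hyx⟩ := rates_eq_zero_of_not_pos hr hsym h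
    simp [Jcur, aMob, hxy, hyx]

theorem aMob_mul_sinh_mul_sinh {ρ : V → ℝ} (hr : ∀ x y, 0 ≤ r x y)
    (hsym : ∀ x y, 0 < r x y ↔ 0 < r y x) (hπ : ∀ x, 0 < π x) (hρ : ∀ x, 0 < ρ x)
    (x y : V) :
    aMob r ρ x y * Real.sinh (Real.log (ρ x * π y / (ρ y * π x)) / 2) *
      Real.sinh (Real.log (π x * r x y / (π y * r y x)) / 2)
      = (ρ x * r x y + ρ y * r y x - π y / π x * ρ x * r y x
          - π x / π y * ρ y * r x y) / 2 := by
  by_cases h : 0 < r x y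
  · have hyx := (hsym x y).1 h
    have hx := hρ x; have hy := hρ y; have hπx := hπ x; have hπy := hπ y
    set FS := Real.log (ρ x * π y / (ρ y * π x))
    set FA := Real.log (π x * r x y / (π y * r y x))
    have hsum : FS + FA = Real.log (ρ x * r x y / (ρ y * r y x)) := by
      rw [← Real.log_mul (by positivity) (by positivity)]
      congr 1; field_simp
    have hdiff :
        FS - FA = Real.log (π y / π x * ρ x * r y x / (π x / π y * ρ y * r x y)) := by
      rw [← Real.log_div (by positivity) (by positivity)]
      congr 1; field_simp
    have hprod : ρ x * r x y * (ρ y * r y x)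
        = π y / π x * ρ x * r y x * (π x / π y * ρ y * r x y) := by
      field_simp
    have hcosh : 2 * (aMob r ρ x y * Real.sinh (FS / 2) * Real.sinh (FA / 2))
        = aMob r ρ x y * Real.cosh ((FS + FA) / 2)
          - aMob r ρ x y * Real.cosh ((FS - FA) / 2) := by
      rw [add_div, sub_div, Real.cosh_add, Real.cosh_sub]; ring
    have hcosh_add : aMob r ρ x y * Real.cosh ((FS + FA) / 2) = ρ x * r x y + ρ y * r y x := by
      rw [hsum, aMob, Real.two_mul_sqrt_mul_mul_cosh_half_log_div (by positivity) (by positivity)]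
    have hcosh_sub : aMob r ρ x y * Real.cosh ((FS - FA) / 2)
        = π y / π x * ρ x * r y x + π x / π y * ρ y * r x y := by
      rw [hdiff, aMob, hprod,
        Real.two_mul_sqrt_mul_mul_cosh_half_log_div (by positivity) (by positivity)]
    linarith
  · obtain ⟨hxy, hyx⟩ := rates_eq_zero_of_not_pos hr hsym h
    simp [aMob, hxy, hyx]

variable [Fintype V]

theorem sum_aMob_mul_sinh_mul_sinh_eq_zero {ρ : V → ℝ} (hr : ∀ x y, 0 ≤ r x y)
    (hsym : ∀ x y, 0 < r x y ↔ 0 < r y x) (hπ : ∀ x, 0 < π x)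
    (hinv : ∀ x, ∑ y, π x * r x y = ∑ y, π y * r y x) (hρ : ∀ x, 0 < ρ x) :
    ∑ x, ∑ y, aMob r ρ x y * Real.sinh (Real.log (ρ x * π y / (ρ y * π x)) / 2) *
      Real.sinh (Real.log (π x * r x y / (π y * r y x)) / 2) = 0 := by
  simp only [aMob_mul_sinh_mul_sinh hr hsym hπ hρ]
  have hswap : ∑ x, ∑ y, ρ y * r y x = ∑ x, ∑ y, ρ x * r x y := sum_comm
  have hswap' :
      ∑ x, ∑ y, π x / π y * ρ y * r x y = ∑ x, ∑ y, π y / π x * ρ x * r y x := sum_comm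
  have hstationary :
      ∑ x, ∑ y, π y / π x * ρ x * r y x = ∑ x, ∑ y, ρ x * r x y := by
    refine sum_congr rfl fun x _ => ?_
    have hπx := (hπ x).ne'
    calc ∑ y, π y / π x * ρ x * r y x = ρ x / π x * ∑ y, π y * r y x := by
          rw [mul_sum]; exact sum_congr rfl fun y _ => by field_simp
      _ = ∑ y, ρ x * r x y := by
          rw [← hinv x, mul_sum]; exact sum_congr rfl fun y _ => by field_simp
  simp only [sum_sub_distrib, sum_add_distrib, ← sum_div]
  linarith

theorem pairF_Jcur_eq_PsiStar_add_PhiOM {ρ : V → ℝ} (hr : ∀ x y, 0 ≤ r x y)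
    (hsym : ∀ x y, 0 < r x y ↔ 0 < r y x) (hπ : ∀ x, 0 < π x)
    (hinv : ∀ x, ∑ y, π x * r x y = ∑ y, π y * r y x) (hρ : ∀ x, 0 < ρ x) :
    pairF (Jcur r ρ) (fun x y => Real.log (ρ x * π y / (ρ y * π x)))
      = PsiStar
          (fun x y => aMob r ρ x y * Real.cosh (Real.log (π x * r x y / (π y * r y x)) / 2))
          (fun x y => Real.log (ρ x * π y / (ρ y * π x)))
        + PhiOM (aMob r ρ) (Jcur r ρ) (fun x y => Real.log (π x * r x y / (π y * r y x))) := by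
  rw [pairF_eq_PsiStar_add_PhiOM_add (aMob_nonneg r ρ) (Jcur_eq_aMob_mul_sinh hr hsym hπ hρ),
    sum_aMob_mul_sinh_mul_sinh_eq_zero hr hsym hπ hinv hρ, add_zero]

theorem pairF_Jcur_nonneg {ρ : V → ℝ} (hr : ∀ x y, 0 ≤ r x y)
    (hsym : ∀ x y, 0 < r x y ↔ 0 < r y x) (hπ : ∀ x, 0 < π x)
    (hinv : ∀ x, ∑ y, π x * r x y = ∑ y, π y * r y x) (hρ : ∀ x, 0 < ρ x) :
    0 ≤ pairF (Jcur r ρ) (fun x y => Real.log (ρ x * π y / (ρ y * π x))) := by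
  rw [pairF_Jcur_eq_PsiStar_add_PhiOM hr hsym hπ hinv hρ]
  exact add_nonneg
    (PsiStar_nonneg fun x y => mul_nonneg (aMob_nonneg r ρ x y) (Real.cosh_pos _).le)
    (PhiOM_nonneg (aMob_nonneg r ρ) (Jcur_eq_aMob_mul_sinh hr hsym hπ hρ) _)

theorem hasDerivAt_sum_mul_log_div {ρ : ℝ → V → ℝ} (hπ : ∀ x, 0 < π x)
    (hρ : ∀ t x, 0 < ρ t x)
    (hmaster : ∀ t x, HasDerivAt (fun s => ρ s x) (-∑ y, Jcur r (ρ t) x y) t) (t : ℝ) :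
    HasDerivAt (fun s => ∑ x, ρ s x * Real.log (ρ s x / π x))
      (-pairF (Jcur r (ρ t)) (fun x y => Real.log (ρ t x * π y / (ρ t y * π x)))) t := by
  refine (HasDerivAt.fun_sum fun x _ =>
    (hmaster t x).mul_log_div_const (hρ t x).ne' (hπ x).ne').congr_deriv ?_
  have hgrad : ∀ x y, Real.log (ρ t x * π y / (ρ t y * π x))
      = (Real.log (ρ t x / π x) + 1) - (Real.log (ρ t y / π y) + 1) := fun x y => by
    have := hρ t x; have := hρ t y; have := hπ x; have := hπ y
    rw [add_sub_add_right_eq_sub, ← Real.log_div (by positivity) (by positivity)]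
    congr 1; field_simp
  have hanti : ∀ x y, Jcur r (ρ t) y x = -Jcur r (ρ t) x y := fun x y => by
    simp only [Jcur]; ring
  simp only [hgrad, neg_mul, sum_neg_distrib, sum_sum_mul_eq_pairF_sub hanti]

end MarkovChain

theorem free_energy_monotone_decay_general {V : Type*} [Fintype V]
    (r : V → V → ℝ) (π : V → ℝ)
    (hr : ∀ x y, 0 ≤ r x y) (hsym : ∀ x y, 0 < r x y ↔ 0 < r y x)
    (hπpos : ∀ x, 0 < π x)
    (hinv : ∀ x, ∑ y, π x * r x y = ∑ y, π y * r y x)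
    (ρ : ℝ → V → ℝ)
    (hρpos : ∀ t x, 0 < ρ t x)
    (hmaster : ∀ t x, HasDerivAt (fun s => ρ s x) (-∑ y, Jcur r (ρ t) x y) t) :
    (∀ t, HasDerivAt (fun s => ∑ x, ρ s x * Real.log (ρ s x / π x))
        (-(PsiStar
              (fun x y => aMob r (ρ t) x y *
                Real.cosh (Real.log ((π x * r x y) / (π y * r y x)) / 2))
              (fun x y => Real.log (ρ t x * π y / (ρ t y * π x))))
          - PhiOM (aMob r (ρ t)) (Jcur r (ρ t))
              (fun x y => Real.log ((π x * r x y) / (π y * r y x)))) t)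
      ∧ (∀ t,
          (-(PsiStar
                (fun x y => aMob r (ρ t) x y *
                  Real.cosh (Real.log ((π x * r x y) / (π y * r y x)) / 2))
                (fun x y => Real.log (ρ t x * π y / (ρ t y * π x))))
            - PhiOM (aMob r (ρ t)) (Jcur r (ρ t))
                (fun x y => Real.log ((π x * r x y) / (π y * r y x)))) ≤ 0)
      ∧ Antitone fun t => ∑ x, ρ t x * Real.log (ρ t x / π x) := by
  have hrate := hasDerivAt_sum_mul_log_div hπpos hρpos hmaster
  have hsplit t := pairF_Jcur_eq_PsiStar_add_PhiOM hr hsym hπpos hinv (hρpos t)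
  have hdissipation t := pairF_Jcur_nonneg hr hsym hπpos hinv (hρpos t)
  refine ⟨fun t => (hrate t).congr_deriv (by rw [hsplit t]; ring),
    fun t => by linarith [hsplit t, hdissipation t],
    antitone_of_hasDerivAt_nonpos hrate fun t => neg_nonpos.2 (hdissipation t)⟩

/-- Monotone decay of free energy along minimisers: if `ρ̇_t = -div J(ρ_t)`
(solution of the master equation), then
`d/dt 𝓕(ρ_t) = -Ψ*_S(ρ_t, F^S(ρ_t)) - Φ(ρ_t, J(ρ_t), F^A) ≤ 0`, and hence the
relative entropy `𝓕(ρ_t)` is nonincreasing in `t`. -/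
theorem free_energy_monotone_decay {V : Type*} [Fintype V]
    (r : V → V → ℝ) (π : V → ℝ)
    (hr : ∀ x y, 0 ≤ r x y) (hsym : ∀ x y, 0 < r x y ↔ 0 < r y x)
    (hπpos : ∀ x, 0 < π x)
    (hinv : ∀ x, ∑ y, π x * r x y = ∑ y, π y * r y x)
    (ρ : ℝ → V → ℝ)
    (hρpos : ∀ t x, 0 < ρ t x) (hρsum : ∀ t, ∑ x, ρ t x = 1)
    (hmaster : ∀ t x, HasDerivAt (fun s => ρ s x) (-∑ y, Jcur r (ρ t) x y) t) :
    (∀ t, HasDerivAt (fun s => ∑ x, ρ s x * Real.log (ρ s x / π x))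
        (-(PsiStar
              (fun x y => aMob r (ρ t) x y *
                Real.cosh (Real.log ((π x * r x y) / (π y * r y x)) / 2))
              (fun x y => Real.log (ρ t x * π y / (ρ t y * π x))))
          - PhiOM (aMob r (ρ t)) (Jcur r (ρ t))
              (fun x y => Real.log ((π x * r x y) / (π y * r y x)))) t)
      ∧ (∀ t,
          (-(PsiStar
                (fun x y => aMob r (ρ t) x y *
                  Real.cosh (Real.log ((π x * r x y) / (π y * r y x)) / 2))
                (fun x y => Real.log (ρ t x * π y / (ρ t y * π x))))
            - PhiOM (aMob r (ρ t)) (Jcur r (ρ t))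
                (fun x y => Real.log ((π x * r x y) / (π y * r y x)))) ≤ 0)
      ∧ Antitone fun t => ∑ x, ρ t x * Real.log (ρ t x / π x) :=
  free_energy_monotone_decay_general r π hr hsym hπpos hinv ρ hρpos hmaster
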